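/- Let (𝒜, φ) be a *-probability space containing a free family a_1,...,a_d of self-adjoint standard semicircular elements (κ_2(a_i) = 1, all other free cumulants 0). Let x = Σ_{i=1}^d a_i ⊗ a_i in (𝒜 ⊗ 𝒜, φ ⊗ φ). Then (φ⊗φ)(x^{2n−1}) = 0 and (φ⊗φ)(x^{2n}) = Σ_{π,ρ ∈ NC(n)} d^{#Orb(M_{π,ρ})} = Σ_{k=1}^n m^{(k)}_n d^k for every n ∈ ℕ. -/

import Mathlib

open scoped Classical

/-- A setoid (partition) of `Fin n` is non-crossing if there is no crossing
`a < b < c < d` with `a ∼ c`, `b ∼ d` but `a` and `b` in distinct blocks. -/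
def IsNC {n : ℕ} (S : Setoid (Fin n)) : Prop :=
  ∀ a b c d : Fin n, a < b → b < c → c < d → S.r a c → S.r b d → S.r a b

/-- A partition is a pairing if every block has exactly two elements. -/
def IsPairing {m : ℕ} (T : Setoid (Fin m)) : Prop :=
  ∀ x : Fin m, ∃ y : Fin m, y ≠ x ∧ T.r x y ∧ ∀ z : Fin m, T.r x z → z = x ∨ z = y

/-- The block of `i` in the partition `S`, as a finset. -/
noncomputable def blockOf {n : ℕ} (S : Setoid (Fin n)) (i : Fin n) : Finset (Fin n) :=
  Finset.univ.filter (fun j => S.r i j)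

lemma blockOf_nonempty {n : ℕ} (S : Setoid (Fin n)) (i : Fin n) :
    (blockOf S i).Nonempty :=
  ⟨i, by simp [blockOf, S.iseqv.refl i]⟩

/-- The permutation `P_S` which performs an increasing cycle on every block of `S`:
it sends `i` to the next larger element of its block, or to the minimum of the
block if `i` is the largest element of its block. -/
noncomputable def nextP {n : ℕ} (S : Setoid (Fin n)) (i : Fin n) : Fin n :=
  if h : ((blockOf S i).filter (fun j => i < j)).Nonempty
  then ((blockOf S i).filter (fun j => i < j)).min' h
  else (blockOf S i).min' (blockOf_nonempty S i)

/-- The inverse permutation `P_S⁻¹` (decreasing cycle on every block of `S`). -/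
noncomputable def prevP {n : ℕ} (S : Setoid (Fin n)) (i : Fin n) : Fin n :=
  if h : ((blockOf S i).filter (fun j => j < i)).Nonempty
  then ((blockOf S i).filter (fun j => j < i)).max' h
  else (blockOf S i).max' (blockOf_nonempty S i)

/-- `0`-indexed version of the point `2i-1` of `{1,…,2n}`. -/
def dEven {n : ℕ} (j : Fin n) : Fin (2*n) := ⟨2*j.val, by have := j.isLt; omega⟩

/-- `0`-indexed version of the point `2i` of `{1,…,2n}`. -/
def dOdd {n : ℕ} (j : Fin n) : Fin (2*n) := ⟨2*j.val+1, by have := j.isLt; omega⟩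

/-- The doubling construction `π ↦ A(π)`: the pairing of `{1,…,2n}` generated by
pairing each point `2i` with `2P_π(i) - 1`, so that the associated permutation
satisfies `P_{A(π)}(2i) = 2P_π(i) - 1` and `P_{A(π)}(2i-1) = 2P_π⁻¹(i)`. -/
noncomputable def archSetoid {n : ℕ} (S : Setoid (Fin n)) : Setoid (Fin (2*n)) :=
  Relation.EqvGen.setoid (fun a b => ∃ j : Fin n, a = dOdd j ∧ b = dEven (nextP S j))

/-- The meandric system permutation `M_{π,ρ} ∈ S_{2n}`, defined by
`M_{π,ρ}(2i-1) = 2P_π⁻¹(i)` and `M_{π,ρ}(2i) = 2P_ρ(i) - 1` (here `0`-indexed). -/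
noncomputable def meanderMap {n : ℕ} (π ρ : Setoid (Fin n)) (x : Fin (2*n)) : Fin (2*n) :=
  if x.val % 2 = 0
  then dOdd (prevP π ⟨x.val / 2, by have := x.isLt; omega⟩)
  else dEven (nextP ρ ⟨x.val / 2, by have := x.isLt; omega⟩)

/-- The orbit partition of a map. -/
def orbitSetoid {m : ℕ} (f : Fin m → Fin m) : Setoid (Fin m) :=
  Relation.EqvGen.setoid (fun a b => f a = b)

/-- Number of orbits of a map. -/
noncomputable def numOrbits {m : ℕ} (f : Fin m → Fin m) : ℕ :=
  Nat.card (Quotient (orbitSetoid f))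

/-- `S` is a union of blocks of the partition `T`. -/
def IsBlockUnion {m : ℕ} (T : Setoid (Fin m)) (S : Set (Fin m)) : Prop :=
  ∀ x ∈ S, ∀ y, T.r x y → y ∈ S

/-- `S` is invariant under `f`. -/
def MInvariant {m : ℕ} (f : Fin m → Fin m) (S : Set (Fin m)) : Prop :=
  ∀ x ∈ S, f x ∈ S

/-- The meandric system `M_{π,ρ}` is reducible: some proper subinterval
`{a,…,b}` of `{1,…,2n}` is invariant under `M_{π,ρ}`. -/
noncomputable def Reducible {n : ℕ} (π ρ : Setoid (Fin n)) : Prop :=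
  ∃ a b : Fin (2*n), a ≤ b ∧ b.val - a.val < 2*n - 1 ∧
    MInvariant (meanderMap π ρ) {x | a ≤ x ∧ x ≤ b}

/-- The join in the lattice of non-crossing partitions: the smallest
non-crossing partition above both `π` and `ρ`. -/
noncomputable def ncJoin {m : ℕ} (π ρ : Setoid (Fin m)) : Setoid (Fin m) :=
  sInf {τ | IsNC τ ∧ π ≤ τ ∧ ρ ≤ τ}

/-- The moment-cumulant formula of free probability: `mom n` is the sum over all
non-crossing partitions of `{1,…,n}` of the products of cumulants `κ` indexed
by the block sizes.  This uniquely determines the free cumulants `κ n`, `n ≥ 1`,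
of a sequence of moments. -/
def MomCum {F : Type*} [Field F] (mom κ : ℕ → F) : Prop :=
  ∀ n : ℕ, 0 < n →
    mom n = ∑ᶠ S ∈ {S : Setoid (Fin n) | IsNC S}, ∏ᶠ B ∈ Setoid.classes S, κ B.ncard

/-- The number of irreducible meandric systems on `2k` bridges, described as the
number of pairs `(π,ρ) ∈ NC(k)²` with `π ∨ ρ = 1_k`, `π ∧ ρ = 0_k`. -/
noncomputable def mirr (k : ℕ) : ℕ :=
  Nat.card {pr : Setoid (Fin k) × Setoid (Fin k) //
    IsNC pr.1 ∧ IsNC pr.2 ∧ ncJoin pr.1 pr.2 = ⊤ ∧ pr.1 ⊓ pr.2 = ⊥}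

/-- The number of pairs `(π,ρ) ∈ NC(n)²` whose meandric system `M_{π,ρ}` has
exactly `k` orbits (connected components). -/
noncomputable def mcount (n k : ℕ) : ℕ :=
  Nat.card {pr : Setoid (Fin n) × Setoid (Fin n) //
    IsNC pr.1 ∧ IsNC pr.2 ∧ numOrbits (meanderMap pr.1 pr.2) = k}

/-- The number of meanders on `2n` bridges. -/
noncomputable def meanderNum (n : ℕ) : ℕ := mcount n 1

/-!
Expanding the power gives `(φ ⊗ φ)(x^m) = Σ_i φ(a_{i(1)} ⋯ a_{i(m)})²`, and by the moment
hypothesis each factor counts the non-crossing pairings `σ ≤ ker i`; there are none for odd `m`.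
For `m = 2n`, exchanging the sums counts, for every pair `(σ, τ)` of non-crossing pairings, the
colourings `i` constant on the blocks of `σ ⊔ τ`, that is `d ^ #(σ ⊔ τ)`. The non-crossing
pairings of `2n` points are exactly the doublings `A(π)` of the non-crossing partitions `π` of
`n` points, and the blocks of `A(π) ⊔ A(ρ)` are the orbits of the meandric permutation
`M_{π,ρ}`.
-/

lemma even_card_of_involution {α : Type*} {s : Finset α} {f : α → α}
    (hmem : ∀ x ∈ s, f x ∈ s) (hinv : ∀ x ∈ s, f (f x) = x) (hne : ∀ x ∈ s, f x ≠ x) :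
    Even s.card := by
  have h : ∑ _x ∈ s, (1 : ZMod 2) = 0 :=
    Finset.sum_involution (fun x _ => f x) (fun _ _ => by decide) (fun x hx _ => hne x hx)
      hmem hinv
  rwa [Finset.sum_const, nsmul_one, ZMod.natCast_eq_zero_iff_even] at h

lemma Relation.EqvGen.mem_iff_of_graph {α : Type*} {f : α → α} {s : Set α}
    (hs : ∀ x, f x ∈ s ↔ x ∈ s) {x y : α} (h : Relation.EqvGen (fun a b => f a = b) x y) :
    x ∈ s ↔ y ∈ s := by
  induction h with
  | rel a b hab => exact hab ▸ (hs a).symm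
  | refl => rfl
  | symm _ _ _ ih => exact ih.symm
  | trans _ _ _ _ _ ih₁ ih₂ => exact ih₁.trans ih₂

/-- On a finite type an injective `f` maps an `f`-invariant set onto itself, so orbits cannot
leave it. -/
lemma orbitSetoid_mem_of_rel {m : ℕ} {f : Fin m → Fin m} (hf : Function.Injective f)
    {s : Set (Fin m)} (hs : MInvariant f s) {x y : Fin m} (h : (orbitSetoid f).r x y)
    (hx : x ∈ s) : y ∈ s := by
  have hbij : Set.BijOn f s s :=
    (s.toFinite.injOn_iff_bijOn_of_mapsTo hs).mp hf.injOn
  refine (Relation.EqvGen.mem_iff_of_graph (fun z => ⟨fun hz => ?_, hs z⟩) h).mp hx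
  obtain ⟨w, hw, hwz⟩ := hbij.surjOn hz
  exact hf hwz ▸ hw

lemma eqvGen_iff_of_involutive {α : Type*} {m : α → α} (hm : Function.Involutive m)
    {r : α → α → Prop} (hr : ∀ a b, r a b → b = m a) (hr' : ∀ a, r a (m a) ∨ r (m a) a)
    (x y : α) : Relation.EqvGen r x y ↔ y = x ∨ y = m x := by
  constructor
  · intro h
    induction h with
    | rel a b hab => exact Or.inr (hr a b hab)
    | refl a => exact Or.inl rfl
    | symm a b _ ih => rcases ih with rfl | rfl <;> simp [hm _]
    | trans a b c _ _ ih₁ ih₂ =>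
      rcases ih₁ with rfl | rfl <;> rcases ih₂ with rfl | rfl <;> simp [hm _]
  · rintro (rfl | rfl)
    · exact Relation.EqvGen.refl _
    · rcases hr' x with h | h
      · exact Relation.EqvGen.rel _ _ h
      · exact Relation.EqvGen.symm _ _ (Relation.EqvGen.rel _ _ h)

instance Setoid.instFinite {α : Type*} [Finite α] : Finite (Setoid α) :=
  Finite.of_injective (fun S : Setoid α => S.r) fun _ _ h =>
    Setoid.ext fun a b => Iff.of_eq (congrFun₂ h a b)

noncomputable instance Setoid.instFintype {α : Type*} [Finite α] : Fintype (Setoid α) :=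
  Fintype.ofFinite _

section NextPrev

variable {n : ℕ} (S : Setoid (Fin n))

lemma mem_blockOf {i j : Fin n} : j ∈ blockOf S i ↔ S.r i j := by simp [blockOf]

lemma rel_nextP (i : Fin n) : S.r i (nextP S i) := by
  unfold nextP
  split_ifs with h
  · exact (mem_blockOf S).mp (Finset.mem_filter.mp (Finset.min'_mem _ h)).1
  · exact (mem_blockOf S).mp (Finset.min'_mem _ _)

lemma rel_prevP (i : Fin n) : S.r i (prevP S i) := by
  unfold prevP
  split_ifs with h
  · exact (mem_blockOf S).mp (Finset.mem_filter.mp (Finset.max'_mem _ h)).1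
  · exact (mem_blockOf S).mp (Finset.max'_mem _ _)

variable {S}

lemma nextP_le_of_rel {i k : Fin n} (hr : S.r i k) (hik : i < k) :
    i < nextP S i ∧ nextP S i ≤ k := by
  have hk : k ∈ (blockOf S i).filter (fun j => i < j) :=
    Finset.mem_filter.mpr ⟨(mem_blockOf S).mpr hr, hik⟩
  rw [nextP, dif_pos ⟨k, hk⟩]
  exact ⟨(Finset.mem_filter.mp (Finset.min'_mem _ _)).2, Finset.min'_le _ _ hk⟩

lemma nextP_le_of_isGreatest {i : Fin n} (hmax : ∀ k, S.r i k → k ≤ i) {k : Fin n}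
    (hr : S.r i k) : nextP S i ≤ k := by
  have hne : ¬ ((blockOf S i).filter (fun j => i < j)).Nonempty := fun ⟨j, hj⟩ => by
    rw [Finset.mem_filter, mem_blockOf] at hj
    exact absurd (hmax j hj.1) (not_le.mpr hj.2)
  rw [nextP, dif_neg hne]
  exact Finset.min'_le _ _ ((mem_blockOf S).mpr hr)

lemma prevP_ge_of_rel {i k : Fin n} (hr : S.r i k) (hki : k < i) :
    prevP S i < i ∧ k ≤ prevP S i := by
  have hk : k ∈ (blockOf S i).filter (fun j => j < i) :=
    Finset.mem_filter.mpr ⟨(mem_blockOf S).mpr hr, hki⟩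
  rw [prevP, dif_pos ⟨k, hk⟩]
  exact ⟨(Finset.mem_filter.mp (Finset.max'_mem _ ⟨k, hk⟩)).2, Finset.le_max' _ _ hk⟩

lemma le_prevP_of_isLeast {i : Fin n} (hmin : ∀ k, S.r i k → i ≤ k) {k : Fin n}
    (hr : S.r i k) : k ≤ prevP S i := by
  have hne : ¬ ((blockOf S i).filter (fun j => j < i)).Nonempty := fun ⟨j, hj⟩ => by
    rw [Finset.mem_filter, mem_blockOf] at hj
    exact absurd (hmin j hj.1) (not_le.mpr hj.2)
  rw [prevP, dif_neg hne]
  exact Finset.le_max' _ _ ((mem_blockOf S).mpr hr)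

lemma nextP_eq_of_lt {i v : Fin n} (hr : S.r i v) (hlt : i < v)
    (hmin : ∀ k, S.r i k → i < k → v ≤ k) : nextP S i = v :=
  have h := nextP_le_of_rel hr hlt
  le_antisymm h.2 (hmin _ (rel_nextP S i) h.1)

lemma nextP_eq_of_block_subset_Icc {i v : Fin n} (hr : S.r i v)
    (hblock : ∀ k, S.r i k → v ≤ k ∧ k ≤ i) :
    nextP S i = v :=
  le_antisymm (nextP_le_of_isGreatest (fun k hk => (hblock k hk).2) hr)
    (hblock _ (rel_nextP S i)).1

lemma prevP_eq_of_lt {i v : Fin n} (hr : S.r i v) (hlt : v < i)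
    (hmax : ∀ k, S.r i k → k < i → k ≤ v) : prevP S i = v :=
  have h := prevP_ge_of_rel hr hlt
  le_antisymm (hmax _ (rel_prevP S i) h.1) h.2

lemma prevP_eq_of_block_subset_Icc {i v : Fin n} (hr : S.r i v)
    (hblock : ∀ k, S.r i k → i ≤ k ∧ k ≤ v) :
    prevP S i = v :=
  le_antisymm (hblock _ (rel_prevP S i)).2
    (le_prevP_of_isLeast (fun k hk => (hblock k hk).1) hr)

variable (S)

lemma prevP_nextP (i : Fin n) : prevP S (nextP S i) = i := by
  have hv := rel_nextP S i
  have hrel : ∀ k, S.r (nextP S i) k ↔ S.r i k := fun k =>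
    ⟨S.iseqv.trans hv, S.iseqv.trans (S.iseqv.symm hv)⟩
  by_cases h : ∃ k, S.r i k ∧ i < k
  · obtain ⟨k₀, hk₀, hik₀⟩ := h
    refine prevP_eq_of_lt (S.iseqv.symm hv) (nextP_le_of_rel hk₀ hik₀).1 fun k hk hkv => ?_
    by_contra hik
    exact absurd (nextP_le_of_rel ((hrel k).1 hk) (not_le.mp hik)).2 (not_le.mpr hkv)
  · push Not at h
    exact prevP_eq_of_block_subset_Icc (S.iseqv.symm hv) fun k hk =>
      ⟨nextP_le_of_isGreatest h ((hrel k).1 hk), h k ((hrel k).1 hk)⟩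

lemma nextP_injective : Function.Injective (nextP S) :=
  Function.LeftInverse.injective (prevP_nextP S)

lemma nextP_prevP (i : Fin n) : nextP S (prevP S i) = i := by
  obtain ⟨k, rfl⟩ := Finite.injective_iff_surjective.mp (nextP_injective S) i
  rw [prevP_nextP]

lemma prevP_injective : Function.Injective (prevP S) :=
  Function.LeftInverse.injective (nextP_prevP S)

lemma orbitSetoid_nextP_rel {i j : Fin n} (hij : i ≤ j) (hr : S.r i j) :
    (orbitSetoid (nextP S)).r i j := by
  induction hgap : j.val - i.val using Nat.strong_induction_on generalizing i with
  | _ g ih =>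
    rcases hij.eq_or_lt with rfl | hlt
    · exact (orbitSetoid (nextP S)).iseqv.refl i
    obtain ⟨hi, hj⟩ := nextP_le_of_rel hr hlt
    have hrel : S.r (nextP S i) j := S.iseqv.trans (S.iseqv.symm (rel_nextP S i)) hr
    have hlt' : j.val - (nextP S i).val < g := by
      have := Fin.lt_def.mp hi; omega
    exact (orbitSetoid (nextP S)).iseqv.trans (Relation.EqvGen.rel _ _ rfl)
      (ih _ hlt' hj hrel rfl)

lemma orbitSetoid_nextP : orbitSetoid (nextP S) = S :=
  le_antisymm (Setoid.eqvGen_le fun a _ h => h ▸ rel_nextP S a) fun x y hxy =>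
    (le_total x y).elim (orbitSetoid_nextP_rel S · hxy) fun hyx =>
      (orbitSetoid (nextP S)).iseqv.symm (orbitSetoid_nextP_rel S hyx (S.iseqv.symm hxy))

lemma nextP_eq_self_iff {i : Fin n} : nextP S i = i ↔ ∀ k, S.r i k → k = i := by
  refine ⟨fun h k hk => ?_, fun h => h _ (rel_nextP S i)⟩
  by_contra hki
  rcases lt_or_gt_of_ne hki with hlt | hgt
  · by_cases hmax : ∀ k, S.r i k → k ≤ i
    · exact absurd (h ▸ nextP_le_of_isGreatest hmax hk) (not_le.mpr hlt)
    · push Not at hmax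
      obtain ⟨k', hk', hik'⟩ := hmax
      exact absurd h (nextP_le_of_rel hk' hik').1.ne'
  · exact absurd h (nextP_le_of_rel hk hgt).1.ne'

end NextPrev

section Doubling

variable {n : ℕ}

lemma dEven_val (j : Fin n) : (dEven j).val = 2 * j.val := rfl

lemma dOdd_val (j : Fin n) : (dOdd j).val = 2 * j.val + 1 := rfl

lemma dEven_injective : Function.Injective (dEven (n := n)) := fun a b h =>
  Fin.ext (by have := congrArg Fin.val h; rw [dEven_val, dEven_val] at this; omega)

lemma dOdd_injective : Function.Injective (dOdd (n := n)) := fun a b h =>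
  Fin.ext (by have := congrArg Fin.val h; rw [dOdd_val, dOdd_val] at this; omega)

@[simp] lemma dEven_lt_dEven {j k : Fin n} : dEven j < dEven k ↔ j < k := by
  simp only [Fin.lt_def, dEven]; omega

@[simp] lemma dOdd_lt_dOdd {j k : Fin n} : dOdd j < dOdd k ↔ j < k := by
  simp only [Fin.lt_def, dOdd]; omega

@[simp] lemma dOdd_lt_dEven {j k : Fin n} : dOdd j < dEven k ↔ j < k := by
  simp only [Fin.lt_def, dOdd, dEven]; omega

@[simp] lemma dEven_lt_dOdd {j k : Fin n} : dEven j < dOdd k ↔ j ≤ k := by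
  simp only [Fin.lt_def, Fin.le_def, dOdd, dEven]; omega

lemma dEven_or_dOdd (x : Fin (2 * n)) : (∃ j, x = dEven j) ∨ ∃ j, x = dOdd j := by
  have hx := x.isLt
  rcases Nat.even_or_odd' x.val with ⟨c, hc | hc⟩
  · exact Or.inl ⟨⟨c, by omega⟩, Fin.ext hc⟩
  · exact Or.inr ⟨⟨c, by omega⟩, Fin.ext hc⟩

lemma meanderMap_dEven (π ρ : Setoid (Fin n)) (j : Fin n) :
    meanderMap π ρ (dEven j) = dOdd (prevP π j) := by
  have hj : (2 * j.val) / 2 = j.val := by omega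
  simp [meanderMap, dEven, hj]

lemma meanderMap_dOdd (π ρ : Setoid (Fin n)) (j : Fin n) :
    meanderMap π ρ (dOdd j) = dEven (nextP ρ j) := by
  have hj : (2 * j.val + 1) / 2 = j.val := by omega
  simp [meanderMap, dOdd, hj]

end Doubling

namespace IsNC

variable {m : ℕ} {S : Setoid (Fin m)}

lemma mem_Ioo_of_rel (hS : IsNC S) {j k v w : Fin m} (hjk : j < k) (hkv : k < v)
    (hjv : S.r j v) (hkw : S.r k w) (hjk' : ¬ S.r j k) : j < w ∧ w < v := by
  constructor
  · by_contra hwj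
    rcases (not_lt.mp hwj).eq_or_lt with rfl | hwj
    · exact hjk' (S.iseqv.symm hkw)
    · exact hjk' (S.iseqv.trans (S.iseqv.symm (hS w j k v hwj hjk hkv (S.iseqv.symm hkw) hjv))
        (S.iseqv.symm hkw))
  · by_contra hvw
    rcases (not_lt.mp hvw).eq_or_lt with rfl | hvw
    · exact hjk' (S.iseqv.trans hjv (S.iseqv.symm hkw))
    · exact hjk' (hS j k v w hjk hkv hvw hjv hkw)

lemma rel_mem_Ioo_nextP (hS : IsNC S) {j k w : Fin m} (hjk : j < k) (hk : k < nextP S j)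
    (hkw : S.r k w) : j < w ∧ w < nextP S j :=
  hS.mem_Ioo_of_rel hjk hk (rel_nextP S j) hkw fun h =>
    absurd (nextP_le_of_rel h hjk).2 (not_le.mpr hk)

/-- If `j ≤ prevP S j`, then `j` and `prevP S j` are the least and the greatest element of
their block. -/
lemma rel_mem_Icc_prevP (hS : IsNC S) {j k w : Fin m} (hj : j ≤ prevP S j) (hjk : j ≤ k)
    (hk : k ≤ prevP S j) (hkw : S.r k w) : j ≤ w ∧ w ≤ prevP S j := by
  by_cases hrel : S.r j k
  · have hleast : ∀ l, S.r j l → j ≤ l := fun l hl => not_lt.mp fun hlj =>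
      absurd (prevP_ge_of_rel hl hlj).1 (not_lt.mpr hj)
    have hjw : S.r j w := S.iseqv.trans hrel hkw
    exact ⟨hleast w hjw, le_prevP_of_isLeast hleast hjw⟩
  · have hjk : j < k := hjk.lt_of_ne fun h => hrel (h ▸ S.iseqv.refl j)
    have hk : k < prevP S j := hk.lt_of_ne fun h => hrel (h ▸ rel_prevP S j)
    have h := hS.mem_Ioo_of_rel hjk hk (rel_prevP S j) hkw hrel
    exact ⟨h.1.le, h.2.le⟩

end IsNC

/-- If the gap between consecutive elements of every block is a union of blocks, `S` is
non-crossing: a crossing `a < b < c < d` puts `b` into a gap of the block of `a` that `d`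
leaves. -/
lemma isNC_of_isBlockUnion_Ioo {m : ℕ} {S : Setoid (Fin m)}
    (h : ∀ j, j < nextP S j → IsBlockUnion S {x | j < x ∧ x < nextP S j}) : IsNC S := by
  intro a b c d hab hbc hcd hac hbd
  by_contra hnab
  have hne : ((blockOf S a).filter (· < b)).Nonempty :=
    ⟨a, Finset.mem_filter.mpr ⟨(mem_blockOf S).mpr (S.iseqv.refl a), hab⟩⟩
  obtain ⟨u, hu_mem, hu_max⟩ : ∃ u ∈ (blockOf S a).filter (· < b),
      ∀ x ∈ (blockOf S a).filter (· < b), x ≤ u :=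
    ⟨_, Finset.max'_mem _ hne, fun x hx => Finset.le_max' _ x hx⟩
  obtain ⟨hau, hub⟩ : S.r a u ∧ u < b := by
    simpa only [Finset.mem_filter, mem_blockOf] using hu_mem
  have huc : S.r u c := S.iseqv.trans (S.iseqv.symm hau) hac
  obtain ⟨hu, hvc⟩ := nextP_le_of_rel huc (hub.trans hbc)
  have hav : S.r a (nextP S u) := S.iseqv.trans hau (rel_nextP S u)
  have hbv : b < nextP S u := by
    rcases lt_trichotomy (nextP S u) b with hvb | rfl | hbv
    · exact absurd (hu_max _ (Finset.mem_filter.mpr ⟨(mem_blockOf S).mpr hav, hvb⟩))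
        (not_le.mpr hu)
    · exact absurd hav hnab
    · exact hbv
  have hd := h u hu b ⟨hub, hbv⟩ d hbd
  exact absurd (hd.2.trans_le hvc) (not_lt.mpr hcd.le)

section Pairings

variable {m : ℕ} {T : Setoid (Fin m)}

lemma isPairing_of_rel_iff {p : Fin m → Fin m} (hT : ∀ x y, T.r x y ↔ y = x ∨ y = p x)
    (hp : ∀ x, p x ≠ x) : IsPairing T :=
  fun x => ⟨p x, hp x, (hT x _).2 (Or.inr rfl), fun z hz => (hT x z).1 hz⟩

lemma isNC_of_rel_iff {p : Fin m → Fin m} (hT : ∀ x y, T.r x y ↔ y = x ∨ y = p x)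
    (hnest : ∀ x z, x < z → z < p x → x < p z ∧ p z < p x) : IsNC T := by
  intro a b c d hab hbc hcd hac hbd
  rcases (hT a c).1 hac with h | rfl
  · exact absurd h (hab.trans hbc).ne'
  rcases (hT b d).1 hbd with h | rfl
  · exact absurd h (hbc.trans hcd).ne'
  exact absurd (hnest a b hab hbc).2 (not_lt.mpr hcd.le)

namespace IsPairing

lemma nextP_ne (hT : IsPairing T) (x : Fin m) : nextP T x ≠ x := fun h => by
  obtain ⟨y, hyx, hxy, -⟩ := hT x
  exact hyx ((nextP_eq_self_iff T).mp h y hxy)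

lemma rel_iff (hT : IsPairing T) (x y : Fin m) : T.r x y ↔ y = x ∨ y = nextP T x := by
  obtain ⟨y₀, -, -, huniq⟩ := hT x
  have hnext : nextP T x = y₀ :=
    (huniq _ (rel_nextP T x)).resolve_left (hT.nextP_ne x)
  refine ⟨fun h => hnext ▸ huniq y h, ?_⟩
  rintro (rfl | rfl)
  exacts [T.iseqv.refl y, rel_nextP T x]

lemma nextP_nextP (hT : IsPairing T) (x : Fin m) : nextP T (nextP T x) = x :=
  (((hT.rel_iff _ x).mp (T.iseqv.symm (rel_nextP T x))).resolve_left
    (hT.nextP_ne x).symm).symm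

lemma eq_of_le {T' : Setoid (Fin m)} (hT : IsPairing T) (hT' : IsPairing T') (h : T ≤ T') :
    T = T' := by
  refine le_antisymm h fun x y hxy => ?_
  rcases (hT'.rel_iff x y).mp hxy with rfl | rfl
  · exact T.iseqv.refl y
  · have hx : T'.r x (nextP T x) := h (rel_nextP T x)
    rw [← ((hT'.rel_iff x _).mp hx).resolve_left (hT.nextP_ne x)]
    exact rel_nextP T x

lemma even (hT : IsPairing T) : Even m := by
  simpa using even_card_of_involution (s := Finset.univ) (fun x _ => Finset.mem_univ (nextP T x))
    (fun x _ => hT.nextP_nextP x) (fun x _ => hT.nextP_ne x)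

end IsPairing

namespace IsNC

/-- The points strictly between two partners are matched among themselves, so there is an
even number of them. -/
lemma nextP_mod_two_ne (hNC : IsNC T) (hT : IsPairing T) (x : Fin m) :
    (nextP T x).val % 2 ≠ x.val % 2 := by
  wlog hlt : x < nextP T x generalizing x
  · have h := this (nextP T x) (by
      rw [hT.nextP_nextP]
      exact (not_lt.mp hlt).lt_of_ne (hT.nextP_ne x))
    rw [hT.nextP_nextP] at h
    exact h.symm
  have heven : Even (Finset.Ioo x (nextP T x)).card := by
    refine even_card_of_involution (fun z hz => ?_) (fun z _ => hT.nextP_nextP z)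
      (fun z _ => hT.nextP_ne z)
    rw [Finset.mem_Ioo] at hz ⊢
    exact hNC.rel_mem_Ioo_nextP hz.1 hz.2 (rel_nextP T z)
  rw [Fin.card_Ioo] at heven
  have := Fin.lt_def.mp hlt
  obtain ⟨c, hc⟩ := heven
  omega

end IsNC

end Pairings

section Arch

variable {n : ℕ}

/-- The partner map of the pairing `archSetoid S`. -/
noncomputable def archM (S : Setoid (Fin n)) : Fin (2 * n) → Fin (2 * n) :=
  meanderMap S S

@[simp] lemma archM_dEven (S : Setoid (Fin n)) (j : Fin n) :
    archM S (dEven j) = dOdd (prevP S j) :=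
  meanderMap_dEven S S j

@[simp] lemma archM_dOdd (S : Setoid (Fin n)) (j : Fin n) :
    archM S (dOdd j) = dEven (nextP S j) :=
  meanderMap_dOdd S S j

lemma archM_involutive (S : Setoid (Fin n)) : Function.Involutive (archM S) := fun x => by
  rcases dEven_or_dOdd x with ⟨j, rfl⟩ | ⟨j, rfl⟩
  · rw [archM_dEven, archM_dOdd, nextP_prevP]
  · rw [archM_dOdd, archM_dEven, prevP_nextP]

lemma archM_ne (S : Setoid (Fin n)) (x : Fin (2 * n)) : archM S x ≠ x := by
  rcases dEven_or_dOdd x with ⟨j, rfl⟩ | ⟨j, rfl⟩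
  · rw [archM_dEven, ne_eq, Fin.ext_iff, dOdd_val, dEven_val]; omega
  · rw [archM_dOdd, ne_eq, Fin.ext_iff, dEven_val, dOdd_val]; omega

lemma archSetoid_rel_iff (S : Setoid (Fin n)) (x y : Fin (2 * n)) :
    (archSetoid S).r x y ↔ y = x ∨ y = archM S x := by
  refine eqvGen_iff_of_involutive (archM_involutive S) ?_ ?_ x y
  · rintro a b ⟨j, rfl, rfl⟩
    exact (archM_dOdd S j).symm
  · intro a
    rcases dEven_or_dOdd a with ⟨j, rfl⟩ | ⟨j, rfl⟩
    · exact Or.inr ⟨prevP S j, by rw [archM_dEven], by rw [nextP_prevP]⟩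
    · exact Or.inl ⟨j, rfl, archM_dOdd S j⟩

lemma isPairing_archSetoid (S : Setoid (Fin n)) : IsPairing (archSetoid S) :=
  isPairing_of_rel_iff (archSetoid_rel_iff S) (archM_ne S)

/-- The arc of `archSetoid S` from `dOdd j` spans the gap between `j` and `nextP S j`; the one
from `dEven j` with `j ≤ prevP S j` spans the whole block of `j`. -/
lemma IsNC.archSetoid {S : Setoid (Fin n)} (hS : IsNC S) : IsNC (archSetoid S) := by
  refine isNC_of_rel_iff (archSetoid_rel_iff S) fun x z hxz hz => ?_
  rcases dEven_or_dOdd x with ⟨j, rfl⟩ | ⟨j, rfl⟩ <;>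
    rcases dEven_or_dOdd z with ⟨k, rfl⟩ | ⟨k, rfl⟩ <;>
    simp only [archM_dEven, archM_dOdd, dEven_lt_dEven, dOdd_lt_dOdd, dOdd_lt_dEven,
      dEven_lt_dOdd] at hxz hz ⊢
  · have h := hS.rel_mem_Icc_prevP (hxz.le.trans hz) hxz.le hz (rel_prevP S k)
    exact ⟨h.1, h.2.lt_of_ne fun h' => hxz.ne' (prevP_injective S h')⟩
  · have h := hS.rel_mem_Icc_prevP (hxz.trans hz.le) hxz hz.le (rel_nextP S k)
    refine ⟨h.1.lt_of_ne fun h' => hz.ne ?_, h.2⟩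
    rw [h', prevP_nextP]
  · exact hS.rel_mem_Ioo_nextP hxz hz (rel_prevP S k)
  · exact hS.rel_mem_Ioo_nextP hxz hz (rel_nextP S k)

end Arch

section Meander

variable {n : ℕ}

lemma orbitSetoid_meanderMap (π ρ : Setoid (Fin n)) :
    orbitSetoid (meanderMap π ρ) = archSetoid π ⊔ archSetoid ρ := by
  apply le_antisymm
  · refine Setoid.eqvGen_le fun x y h => ?_
    rcases dEven_or_dOdd x with ⟨j, rfl⟩ | ⟨j, rfl⟩
    · rw [meanderMap_dEven] at h
      subst h
      have h₁ : (archSetoid π).r (dOdd (prevP π j)) (dEven j) :=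
        Relation.EqvGen.rel _ _ ⟨_, rfl, by rw [nextP_prevP]⟩
      exact (archSetoid π ⊔ archSetoid ρ).iseqv.symm (le_sup_left (a := archSetoid π) h₁)
    · rw [meanderMap_dOdd] at h
      subst h
      exact le_sup_right (a := archSetoid π) (Relation.EqvGen.rel _ _ ⟨j, rfl, rfl⟩)
  · refine sup_le (Setoid.eqvGen_le ?_) (Setoid.eqvGen_le ?_) <;> rintro x y ⟨j, rfl, rfl⟩
    · have h : meanderMap π ρ (dEven (nextP π j)) = dOdd j := by
        rw [meanderMap_dEven, prevP_nextP]
      exact Relation.EqvGen.symm _ _ (Relation.EqvGen.rel _ _ h)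
    · exact Relation.EqvGen.rel _ _ (meanderMap_dOdd π ρ j)

lemma archSetoid_injective : Function.Injective (archSetoid (n := n)) := by
  intro π τ h
  have hM : archM π = archM τ := funext fun x => by
    have hx : (archSetoid τ).r x (archM π x) := h ▸ (archSetoid_rel_iff π x _).mpr (Or.inr rfl)
    exact ((archSetoid_rel_iff τ x _).mp hx).resolve_left (archM_ne π x)
  have hnext : nextP π = nextP τ := funext fun j =>
    dEven_injective (by rw [← archM_dOdd, ← archM_dOdd, hM])
  rw [← orbitSetoid_nextP π, ← orbitSetoid_nextP τ, hnext]

lemma numOrbits_meanderMap_pos (hn : 0 < n) (π ρ : Setoid (Fin n)) :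
    0 < numOrbits (meanderMap π ρ) :=
  have : Nonempty (Quotient (orbitSetoid (meanderMap π ρ))) := ⟨Quotient.mk _ ⟨0, by omega⟩⟩
  Nat.card_pos

/-- Every orbit meets the points `dEven k`, since `meanderMap π ρ (dOdd k)` is one of them. -/
lemma numOrbits_meanderMap_le (π ρ : Setoid (Fin n)) : numOrbits (meanderMap π ρ) ≤ n := by
  have hsurj : Function.Surjective
      fun k : Fin n => Quotient.mk (orbitSetoid (meanderMap π ρ)) (dEven k) := by
    refine Quotient.ind fun x => ?_
    rcases dEven_or_dOdd x with ⟨k, rfl⟩ | ⟨k, rfl⟩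
    · exact ⟨k, rfl⟩
    · exact ⟨nextP ρ k, Quotient.sound
        (Relation.EqvGen.symm _ _ (Relation.EqvGen.rel _ _ (meanderMap_dOdd π ρ k)))⟩
  exact (Nat.card_le_card_of_surjective _ hsurj).trans_eq (Nat.card_eq_fintype_card.trans
    (Fintype.card_fin n))

end Meander

section ArchInv

variable {n : ℕ} {T : Setoid (Fin (2 * n))}

/-- The inverse of the doubling construction: for a non-crossing pairing `T`, the partner of
`dOdd j` is `dEven (archInvNext T j)`. -/
noncomputable def archInvNext (T : Setoid (Fin (2 * n))) (j : Fin n) : Fin n :=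
  ⟨(nextP T (dOdd j)).val / 2, by have := (nextP T (dOdd j)).isLt; omega⟩

noncomputable def archInv (T : Setoid (Fin (2 * n))) : Setoid (Fin n) :=
  orbitSetoid (archInvNext T)

lemma nextP_dOdd (hNC : IsNC T) (hT : IsPairing T) (j : Fin n) :
    nextP T (dOdd j) = dEven (archInvNext T j) := by
  have h := hNC.nextP_mod_two_ne hT (dOdd j)
  rw [dOdd_val] at h
  simp only [Fin.ext_iff, dEven_val, archInvNext]
  omega

lemma nextP_dEven_archInvNext (hNC : IsNC T) (hT : IsPairing T) (j : Fin n) :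
    nextP T (dEven (archInvNext T j)) = dOdd j := by
  rw [← nextP_dOdd hNC hT, hT.nextP_nextP]

lemma archInvNext_injective (hNC : IsNC T) (hT : IsPairing T) :
    Function.Injective (archInvNext T) := fun j k h =>
  dOdd_injective (nextP_injective T (by rw [nextP_dOdd hNC hT, nextP_dOdd hNC hT, h]))

lemma archInvNext_mem_Ioo (hNC : IsNC T) (hT : IsPairing T) {j k : Fin n}
    (hjk : j < k) (hk : k < archInvNext T j) :
    j < archInvNext T k ∧ archInvNext T k < archInvNext T j := by
  have h := hNC.rel_mem_Ioo_nextP (dOdd_lt_dOdd.mpr hjk)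
    (by rwa [nextP_dOdd hNC hT, dOdd_lt_dEven]) (rel_nextP T (dOdd k))
  simpa only [nextP_dOdd hNC hT, dOdd_lt_dEven, dEven_lt_dEven] using h

lemma archInvNext_mem_Icc (hNC : IsNC T) (hT : IsPairing T) {j k : Fin n}
    (hkj : archInvNext T j ≤ k) (hk : k ≤ j) :
    archInvNext T j ≤ archInvNext T k ∧ archInvNext T k ≤ j := by
  rcases hk.eq_or_lt with rfl | hk
  · exact ⟨le_rfl, hkj⟩
  have h := hNC.rel_mem_Ioo_nextP (dEven_lt_dOdd.mpr hkj)
    (by rwa [nextP_dEven_archInvNext hNC hT, dOdd_lt_dOdd]) (rel_nextP T (dOdd k))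
  simp only [nextP_dEven_archInvNext hNC hT, nextP_dOdd hNC hT, dEven_lt_dEven,
    dEven_lt_dOdd] at h
  exact ⟨h.1.le, h.2⟩

lemma archInv_rel_mem {s : Set (Fin n)} (hNC : IsNC T) (hT : IsPairing T)
    (hs : MInvariant (archInvNext T) s) {j k : Fin n} (h : (archInv T).r j k) (hj : j ∈ s) :
    k ∈ s :=
  orbitSetoid_mem_of_rel (archInvNext_injective hNC hT) hs h hj

lemma nextP_archInv (hNC : IsNC T) (hT : IsPairing T) (j : Fin n) :
    nextP (archInv T) j = archInvNext T j := by
  have hj : (archInv T).r j (archInvNext T j) := Relation.EqvGen.rel _ _ rfl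
  rcases lt_or_ge j (archInvNext T j) with hlt | hle
  · refine nextP_eq_of_lt hj hlt fun k hk hjk => not_lt.mp fun hkj => lt_irrefl j ?_
    have hs : MInvariant (archInvNext T) {x | j < x ∧ x < archInvNext T j} :=
      fun x hx => archInvNext_mem_Ioo hNC hT hx.1 hx.2
    exact (archInv_rel_mem hNC hT hs ((archInv T).iseqv.symm hk) ⟨hjk, hkj⟩).1
  · have hs : MInvariant (archInvNext T) {x | archInvNext T j ≤ x ∧ x ≤ j} :=
      fun x hx => archInvNext_mem_Icc hNC hT hx.1 hx.2
    exact nextP_eq_of_block_subset_Icc hj fun k hk => archInv_rel_mem hNC hT hs hk ⟨hle, le_rfl⟩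

lemma IsNC.archInv (hNC : IsNC T) (hT : IsPairing T) : IsNC (archInv T) := by
  refine isNC_of_isBlockUnion_Ioo fun j hj x hx y hxy => ?_
  rw [nextP_archInv hNC hT] at hj hx ⊢
  exact archInv_rel_mem hNC hT (fun z hz => archInvNext_mem_Ioo hNC hT hz.1 hz.2) hxy hx

lemma archSetoid_archInv (hNC : IsNC T) (hT : IsPairing T) : archSetoid (archInv T) = T := by
  refine (isPairing_archSetoid _).eq_of_le hT (Setoid.eqvGen_le ?_)
  rintro x y ⟨j, rfl, rfl⟩
  rw [nextP_archInv hNC hT, ← nextP_dOdd hNC hT]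
  exact rel_nextP T (dOdd j)

end ArchInv

section Counting

lemma card_filter_le_ker {α β : Type*} [Fintype α] [DecidableEq α] [Fintype β] (υ : Setoid α) :
    (Finset.univ.filter fun i : α → β => υ ≤ Setoid.ker i).card =
      Fintype.card β ^ Nat.card (Quotient υ) := by
  rw [← Fintype.card_subtype, ← Nat.card_eq_fintype_card, Nat.card_congr (Setoid.liftEquiv υ),
    Nat.card_fun, Nat.card_eq_fintype_card]

lemma sum_sq_card_filter_le_ker {α β : Type*} [Fintype α] [DecidableEq α] [Fintype β]
    (F : Finset (Setoid α)) :
    ∑ i : α → β, (F.filter fun σ => σ ≤ Setoid.ker i).card ^ 2 =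
      ∑ σ ∈ F, ∑ τ ∈ F, Fintype.card β ^ Nat.card (Quotient (σ ⊔ τ)) := by
  calc ∑ i : α → β, (F.filter fun σ => σ ≤ Setoid.ker i).card ^ 2
      = ∑ i : α → β, ∑ σ ∈ F, ∑ τ ∈ F,
          (if σ ≤ Setoid.ker i then 1 else 0) * (if τ ≤ Setoid.ker i then 1 else 0) := by
        simp only [Finset.card_filter, sq, Finset.sum_mul_sum]
    _ = ∑ σ ∈ F, ∑ τ ∈ F, ∑ i : α → β, if σ ⊔ τ ≤ Setoid.ker i then 1 else 0 := by
        rw [Finset.sum_comm]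
        refine Finset.sum_congr rfl fun σ _ => ?_
        rw [Finset.sum_comm]
        simp only [ite_zero_mul_ite_zero, mul_one, sup_le_iff]
    _ = ∑ σ ∈ F, ∑ τ ∈ F, Fintype.card β ^ Nat.card (Quotient (σ ⊔ τ)) := by
        simp only [← Finset.card_filter, card_filter_le_ker]

noncomputable def ncPartitions (n : ℕ) : Finset (Setoid (Fin n)) :=
  Finset.univ.filter IsNC

noncomputable def ncPairings (m : ℕ) : Finset (Setoid (Fin m)) :=
  Finset.univ.filter fun σ => IsNC σ ∧ IsPairing σ

lemma ncPairings_eq_empty {m : ℕ} (hm : ¬ Even m) : ncPairings m = ∅ :=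
  Finset.filter_false_of_mem fun _ _ hσ => hm hσ.2.even

lemma natCard_ncPairing_le_ker {m d : ℕ} (i : Fin m → Fin d) :
    Nat.card {σ : Setoid (Fin m) // IsNC σ ∧ IsPairing σ ∧ σ ≤ Setoid.ker i} =
      ((ncPairings m).filter fun σ => σ ≤ Setoid.ker i).card := by
  rw [Nat.card_eq_fintype_card, Fintype.card_subtype, ncPairings, Finset.filter_filter]
  simp only [and_assoc]

/-- The doubling `π ↦ archSetoid π` is a bijection from non-crossing partitions of `n` points
onto non-crossing pairings of `2n` points, and it turns the orbits of `M_{π,ρ}` into the blocks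
of `archSetoid π ⊔ archSetoid ρ`. -/
lemma sum_ncPairings_eq_sum_meanderMap {R : Type*} [AddCommMonoid R] (n : ℕ) (f : ℕ → R) :
    ∑ σ ∈ ncPairings (2 * n), ∑ τ ∈ ncPairings (2 * n), f (Nat.card (Quotient (σ ⊔ τ))) =
      ∑ pr ∈ ncPartitions n ×ˢ ncPartitions n, f (numOrbits (meanderMap pr.1 pr.2)) := by
  rw [← Finset.sum_product']
  refine (Finset.sum_nbij (fun pr : Setoid (Fin n) × Setoid (Fin n) =>
    (archSetoid pr.1, archSetoid pr.2)) ?_ ?_ ?_ ?_).symm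
  · intro pr hpr
    simp only [ncPairings, ncPartitions, Finset.mem_product, Finset.mem_filter, Finset.mem_univ,
      true_and] at hpr ⊢
    exact ⟨⟨hpr.1.archSetoid, isPairing_archSetoid _⟩, hpr.2.archSetoid, isPairing_archSetoid _⟩
  · intro pr _ pr' _ h
    simp only [Prod.mk.injEq] at h
    exact Prod.ext (archSetoid_injective h.1) (archSetoid_injective h.2)
  · intro st hst
    simp only [ncPairings, ncPartitions, Finset.coe_product, Finset.coe_filter, Finset.mem_univ,
      true_and, Set.mem_prod, Set.mem_ofPred_eq, Set.mem_image] at hst ⊢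
    exact ⟨(archInv st.1, archInv st.2), ⟨hst.1.1.archInv hst.1.2, hst.2.1.archInv hst.2.2⟩,
      Prod.ext (archSetoid_archInv hst.1.1 hst.1.2) (archSetoid_archInv hst.2.1 hst.2.2)⟩
  · intro pr _
    rw [numOrbits, orbitSetoid_meanderMap]

lemma sum_pow_numOrbits_eq_sum_mcount {R : Type*} [CommSemiring R] {n : ℕ} (hn : 0 < n)
    (x : R) :
    ∑ pr ∈ ncPartitions n ×ˢ ncPartitions n, x ^ numOrbits (meanderMap pr.1 pr.2) =
      ∑ k ∈ Finset.Icc 1 n, (mcount n k : R) * x ^ k := by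
  rw [← Finset.sum_fiberwise_of_maps_to (g := fun pr => numOrbits (meanderMap pr.1 pr.2))
    fun pr _ => Finset.mem_Icc.mpr ⟨numOrbits_meanderMap_pos hn _ _, numOrbits_meanderMap_le _ _⟩]
  refine Finset.sum_congr rfl fun k _ => ?_
  rw [Finset.sum_congr rfl fun pr hpr => by rw [(Finset.mem_filter.mp hpr).2], Finset.sum_const,
    nsmul_eq_mul, mcount, Nat.card_eq_fintype_card, Fintype.card_subtype]
  congr 3
  ext pr
  simp [ncPartitions, and_assoc]

end Counting

section Tensor

open TensorProduct

variable {R A : Type*} [CommSemiring R] [Semiring A] [Algebra R A]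

lemma sum_tmul_self_pow {d : ℕ} (a : Fin d → A) (m : ℕ) :
    (∑ i, a i ⊗ₜ[R] a i) ^ m =
      ∑ i : Fin m → Fin d,
        (List.ofFn fun k => a (i k)).prod ⊗ₜ[R] (List.ofFn fun k => a (i k)).prod := by
  induction m with
  | zero => simp [Algebra.TensorProduct.one_def]
  | succ m ih =>
    rw [pow_succ', ih, Finset.sum_mul_sum, ← Finset.sum_product',
      ← (Fin.consEquiv fun _ : Fin (m + 1) => Fin d).sum_comp]
    refine Fintype.sum_congr _ _ fun p => ?_
    simp [Fin.consEquiv, List.ofFn_succ, Algebra.TensorProduct.tmul_mul_tmul]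

lemma lid_map_sum_tmul_self_pow (φ : A →ₗ[R] R) {d : ℕ} (a : Fin d → A) (m : ℕ) :
    TensorProduct.lid R R (TensorProduct.map φ φ ((∑ i, a i ⊗ₜ[R] a i) ^ m)) =
      ∑ i : Fin m → Fin d, φ (List.ofFn fun k => a (i k)).prod ^ 2 := by
  simp only [sum_tmul_self_pow, map_sum, TensorProduct.map_tmul, TensorProduct.lid_tmul,
    smul_eq_mul, sq]

end Tensor

open TensorProduct in
theorem tensor_semicircular_moments_meandric_general
    (A : Type*) [Ring A] [Algebra ℂ A]
    (φ : A →ₗ[ℂ] ℂ)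
    (d : ℕ) (a : Fin d → A)
    (hfree : ∀ (m : ℕ) (i : Fin m → Fin d),
      φ ((List.ofFn fun k => a (i k)).prod) =
        (Nat.card {σ : Setoid (Fin m) //
          IsNC σ ∧ IsPairing σ ∧ σ ≤ Setoid.ker i} : ℂ)) :
    ∀ n : ℕ, 0 < n →
      ((TensorProduct.lid ℂ ℂ) ((TensorProduct.map φ φ)
          ((∑ i, a i ⊗ₜ[ℂ] a i) ^ (2*n - 1))) = 0) ∧
      ((TensorProduct.lid ℂ ℂ) ((TensorProduct.map φ φ)
          ((∑ i, a i ⊗ₜ[ℂ] a i) ^ (2*n))) =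
        ∑ᶠ pr ∈ {pr : Setoid (Fin n) × Setoid (Fin n) | IsNC pr.1 ∧ IsNC pr.2},
          (d : ℂ) ^ numOrbits (meanderMap pr.1 pr.2)) ∧
      ((TensorProduct.lid ℂ ℂ) ((TensorProduct.map φ φ)
          ((∑ i, a i ⊗ₜ[ℂ] a i) ^ (2*n))) =
        ∑ k ∈ Finset.Icc 1 n, (mcount n k : ℂ) * (d : ℂ) ^ k) := by
  intro n hn
  have hmoment : ∀ m, TensorProduct.lid ℂ ℂ (TensorProduct.map φ φ ((∑ i, a i ⊗ₜ[ℂ] a i) ^ m)) =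
      ((∑ i : Fin m → Fin d, ((ncPairings m).filter fun σ => σ ≤ Setoid.ker i).card ^ 2 : ℕ) : ℂ) :=
    fun m => by
      simp only [lid_map_sum_tmul_self_pow, hfree, natCard_ncPairing_le_ker, Nat.cast_sum,
        Nat.cast_pow]
  have heven : TensorProduct.lid ℂ ℂ (TensorProduct.map φ φ ((∑ i, a i ⊗ₜ[ℂ] a i) ^ (2 * n))) =
      ∑ pr ∈ ncPartitions n ×ˢ ncPartitions n, (d : ℂ) ^ numOrbits (meanderMap pr.1 pr.2) := by
    rw [hmoment, sum_sq_card_filter_le_ker, Fintype.card_fin,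
      sum_ncPairings_eq_sum_meanderMap n (d ^ ·)]
    push_cast
    rfl
  refine ⟨?_, ?_, ?_⟩
  · rw [hmoment, ncPairings_eq_empty (Nat.not_even_iff_odd.mpr ⟨n - 1, by omega⟩)]
    simp
  · rw [heven, ← finsum_mem_coe_finset]
    congr 1
    ext pr
    simp [ncPartitions]
  · rw [heven, sum_pow_numOrbits_eq_sum_mcount hn]

open TensorProduct in
/-- Let `a_1,…,a_d` be a free family of self-adjoint standard semicircular
elements of a `*`-probability space `(𝒜,φ)` (so that mixed moments
`φ(a_{i(1)}⋯a_{i(m)})` count the non-crossing pairings `σ` of `{1,…,m}` with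
`σ ≤ ker i`), and let `x = Σ_i a_i ⊗ a_i ∈ (𝒜 ⊗ 𝒜, φ ⊗ φ)`.  Then the odd
moments of `x` vanish and
`(φ⊗φ)(x^{2n}) = Σ_{π,ρ ∈ NC(n)} d^{#Orb(M_{π,ρ})} = Σ_{k=1}^n m^{(k)}_n d^k`. -/
theorem tensor_semicircular_moments_meandric
    (A : Type*) [Ring A] [Algebra ℂ A] [StarRing A]
    (φ : A →ₗ[ℂ] ℂ) (hφ1 : φ 1 = 1)
    (hpos : ∀ z : A, ∃ r : ℝ, 0 ≤ r ∧ φ (star z * z) = (r : ℂ))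
    (d : ℕ) (a : Fin d → A) (hsa : ∀ i, star (a i) = a i)
    (hfree : ∀ (m : ℕ) (i : Fin m → Fin d),
      φ ((List.ofFn fun k => a (i k)).prod) =
        (Nat.card {σ : Setoid (Fin m) //
          IsNC σ ∧ IsPairing σ ∧ σ ≤ Setoid.ker i} : ℂ)) :
    ∀ n : ℕ, 0 < n →
      ((TensorProduct.lid ℂ ℂ) ((TensorProduct.map φ φ)
          ((∑ i, a i ⊗ₜ[ℂ] a i) ^ (2*n - 1))) = 0) ∧
      ((TensorProduct.lid ℂ ℂ) ((TensorProduct.map φ φ)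
          ((∑ i, a i ⊗ₜ[ℂ] a i) ^ (2*n))) =
        ∑ᶠ pr ∈ {pr : Setoid (Fin n) × Setoid (Fin n) | IsNC pr.1 ∧ IsNC pr.2},
          (d : ℂ) ^ numOrbits (meanderMap pr.1 pr.2)) ∧
      ((TensorProduct.lid ℂ ℂ) ((TensorProduct.map φ φ)
          ((∑ i, a i ⊗ₜ[ℂ] a i) ^ (2*n))) =
        ∑ k ∈ Finset.Icc 1 n, (mcount n k : ℂ) * (d : ℂ) ^ k) :=
  tensor_semicircular_moments_meandric_general A φ d a hfree
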